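/- Let H : ℝ → ℝ be continuous and coercive, and let F : ℝ → ℝ be continuous, non-increasing and semi-coercive. Then the set A_F is a set limiter for H. Moreover, if p ∈ A_F and p⁻ ≠ p then p satisfies condition (S), and if p ∈ A_F and p⁺ ≠ p then p satisfies condition (T); in particular, if p ∈ A_F and p⁻ < p < p⁺, then F(p) = H(p). -/

import Mathlib

open Set Filter Topology

/-- `p⁻ = sup {q < p : H(q) ≥ H(p)}`. -/
noncomputable def pminus (H : ℝ → ℝ) (p : ℝ) : ℝ :=
  sSup {q : ℝ | q < p ∧ H p ≤ H q}

/-- `p⁺ = inf {q > p : H(q) ≤ H(p)}`, with `inf ∅ = +∞` (extended reals). -/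
noncomputable def pplus (H : ℝ → ℝ) (p : ℝ) : EReal :=
  sInf (Real.toEReal '' {q : ℝ | p < q ∧ H q ≤ H p})

/-- `H(p) → +∞` as `|p| → +∞`. -/
def Coercive (H : ℝ → ℝ) : Prop :=
  Tendsto H atTop atTop ∧ Tendsto H atBot atTop

/-- `F(p) → +∞` as `p → -∞`. -/
def SemiCoercive (F : ℝ → ℝ) : Prop := Tendsto F atBot atTop

/-- the open interval `(a⁻, a⁺)` (upper endpoint possibly `+∞`). -/
def ooMM (H : ℝ → ℝ) (a : ℝ) : Set ℝ :=
  {r : ℝ | pminus H a < r ∧ (r : EReal) < pplus H a}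

/-- the open interval `(p, p⁺)` (upper endpoint possibly `+∞`). -/
def ooUp (H : ℝ → ℝ) (p : ℝ) : Set ℝ :=
  {r : ℝ | p < r ∧ (r : EReal) < pplus H p}

/-- the closed interval `[a⁻, a⁺]` (upper endpoint possibly `+∞`). -/
def ccMM (H : ℝ → ℝ) (a : ℝ) : Set ℝ :=
  {r : ℝ | pminus H a ≤ r ∧ (r : EReal) ≤ pplus H a}

/-- `A` is a set limiter for `H`. -/
def IsSetLimiter (H : ℝ → ℝ) (A : Set ℝ) : Prop :=
  (∀ a ∈ A, (pminus H a : EReal) ≠ pplus H a) ∧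
  (∀ a ∈ A, ∀ b ∈ A, a < b → H b ≤ H a) ∧
  (∀ p : ℝ, pminus H p < p → ∃ a ∈ A, (Ioo (pminus H p) p ∩ ooMM H a).Nonempty) ∧
  (∀ p : ℝ, (p : EReal) < pplus H p → ∃ a ∈ A, (ooUp H p ∩ ooMM H a).Nonempty)

open Classical in
/-- The `A`-limited flux function `F_A`: equal to `H(a)` on `[a⁻, a⁺]` for `a ∈ A`,
and to `H` elsewhere. -/
noncomputable def limFlux (H : ℝ → ℝ) (A : Set ℝ) (p : ℝ) : ℝ :=
  if h : ∃ a, a ∈ A ∧ p ∈ ccMM H a then H h.choose else H p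

/-- Condition (S) in the definition of `A_F`. -/
def CondS (H F : ℝ → ℝ) (p : ℝ) : Prop :=
  pminus H p ≠ p ∧ H p ≤ F p ∧
    ∀ q : ℝ, H q ≤ F q → (ooMM H q ∩ Ioo (pminus H p) p).Nonempty → H q ≤ H p

/-- Condition (T) in the definition of `A_F`. -/
def CondT (H F : ℝ → ℝ) (p : ℝ) : Prop :=
  (p : EReal) ≠ pplus H p ∧ F p ≤ H p ∧
    ∀ q : ℝ, F q ≤ H q → (ooMM H q ∩ ooUp H p).Nonempty → H p ≤ H q

/-- The set `A_F` associated with a boundary function `F`. -/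
def limiterOf (H F : ℝ → ℝ) : Set ℝ := {p : ℝ | CondS H F p ∨ CondT H F p}

/-!
If `F p ≤ H p`, let `a` be the largest point at which `H` attains its minimum over the crossing
region `{x ≤ p | F x ≤ H x}`. Because `F` is antitone, every crossing point of `H` and `F` to the
right of `a` would be another such minimiser, so `H > H a` on `(a, p]`; hence `a` satisfies (T)
and `a⁺ ≥ p⁺`. Dually, if `H p ≤ F p`, the smallest maximiser of `H` over `{x ≥ p | H x ≤ F x}`
satisfies (S) and has `a⁻ ≤ p⁻`. These points realise condition (3) of a set limiter.
Comparing a point satisfying (T) (resp. (S)) with such an extremal point shows that it minimises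
(resp. maximises) `H` over the corresponding crossing region; this gives the monotonicity (2) and,
together with the monotonicity of `F`, turns (T) into (S) and back wherever both make sense.
-/

section Extremal

variable {α β : Type*} [ConditionallyCompleteLinearOrder α] [TopologicalSpace α]
  [OrderClosedTopology α] [LinearOrder β] [TopologicalSpace β] [OrderClosedTopology β]

lemma exists_greatest_minimizer {f : α → β} (hf : Continuous f) {s : Set α} (hs : IsCompact s)
    (hne : s.Nonempty) : ∃ a ∈ s, (∀ x ∈ s, f a ≤ f x) ∧ ∀ x ∈ s, f x ≤ f a → x ≤ a := by
  obtain ⟨x₀, hx₀, hmin⟩ := hs.exists_isMinOn hne hf.continuousOn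
  have ht : IsCompact (s ∩ {x | f x ≤ f x₀}) := hs.inter_right (isClosed_le hf continuous_const)
  have ha := ht.sSup_mem ⟨x₀, hx₀, le_rfl⟩
  exact ⟨_, ha.1, fun x hx => ha.2.trans (hmin hx),
    fun x hx hfx => le_csSup ht.bddAbove ⟨hx, hfx.trans ha.2⟩⟩

lemma exists_least_maximizer {f : α → β} (hf : Continuous f) {s : Set α} (hs : IsCompact s)
    (hne : s.Nonempty) : ∃ a ∈ s, (∀ x ∈ s, f x ≤ f a) ∧ ∀ x ∈ s, f a ≤ f x → a ≤ x :=
  exists_greatest_minimizer (α := αᵒᵈ) (β := βᵒᵈ) hf hs hne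

end Extremal

lemma exists_mem_Ioo_lt_of_lt_left {f g : ℝ → ℝ} (hf : Continuous f) (hg : Continuous g)
    {a p : ℝ} (hap : a < p) (hp : f p < g p) : ∃ x ∈ Ioo a p, f x < g x :=
  (((hf.continuousAt.eventually_lt hg.continuousAt hp).filter_mono nhdsWithin_le_nhds).and
    (Ioo_mem_nhdsLT hap)).exists.imp fun _ h => ⟨h.2, h.1⟩

lemma exists_mem_Ioo_lt_of_lt_right {f g : ℝ → ℝ} (hf : Continuous f) (hg : Continuous g)
    {p b : ℝ} (hpb : p < b) (hp : f p < g p) : ∃ x ∈ Ioo p b, f x < g x :=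
  (((hf.continuousAt.eventually_lt hg.continuousAt hp).filter_mono nhdsWithin_le_nhds).and
    (Ioo_mem_nhdsGT hpb)).exists.imp fun _ h => ⟨h.2, h.1⟩

section Bounds

variable {H : ℝ → ℝ}

lemma pminus_set_nonempty (hco : Tendsto H atBot atTop) (p : ℝ) :
    {q : ℝ | q < p ∧ H p ≤ H q}.Nonempty := by
  obtain ⟨b, hb⟩ := (hco.eventually_ge_atTop (H p)).exists_forall_of_atBot
  exact ⟨min b (p - 1), by linarith [min_le_right b (p - 1)], hb _ (min_le_left _ _)⟩

lemma pminus_le (hco : Tendsto H atBot atTop) (p : ℝ) : pminus H p ≤ p :=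
  csSup_le (pminus_set_nonempty hco p) fun _ hq => hq.1.le

lemma le_pminus_of {p r : ℝ} (hrp : r < p) (h : H p ≤ H r) : r ≤ pminus H p :=
  le_csSup ⟨p, fun _ hq => hq.1.le⟩ ⟨hrp, h⟩

lemma apply_lt_of_mem_Ioo_pminus {p r : ℝ} (h₁ : pminus H p < r) (h₂ : r < p) : H r < H p :=
  lt_of_not_ge fun h => (le_pminus_of h₂ h).not_gt h₁

lemma coe_le_pplus (p : ℝ) : (p : EReal) ≤ pplus H p :=
  le_sInf (by rintro _ ⟨q, ⟨hq, _⟩, rfl⟩; exact_mod_cast hq.le)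

lemma pplus_le_of {p r : ℝ} (hpr : p < r) (h : H r ≤ H p) : pplus H p ≤ r :=
  sInf_le ⟨r, ⟨hpr, h⟩, rfl⟩

lemma apply_lt_of_lt_pplus {p r : ℝ} (h₁ : p < r) (h₂ : (r : EReal) < pplus H p) : H p < H r :=
  lt_of_not_ge fun h => (pplus_le_of h₁ h).not_gt h₂

lemma pminus_le_pminus (hco : Tendsto H atBot atTop) {p a : ℝ} (hH : H p ≤ H a)
    (hlt : ∀ r ∈ Ico p a, H r < H a) : pminus H a ≤ pminus H p :=
  csSup_le (pminus_set_nonempty hco a) fun r ⟨hra, hr⟩ => by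
    rcases lt_or_ge r p with hrp | hpr
    · exact le_pminus_of hrp (hH.trans hr)
    · exact absurd hr (hlt r ⟨hpr, hra⟩).not_ge

lemma pplus_le_pplus {a p : ℝ} (hH : H a ≤ H p) (hlt : ∀ r ∈ Ioc a p, H a < H r) :
    pplus H p ≤ pplus H a :=
  le_sInf <| by
    rintro _ ⟨r, ⟨har, hr⟩, rfl⟩
    rcases le_or_gt r p with hrp | hpr
    · exact absurd hr (hlt r ⟨har, hrp⟩).not_ge
    · exact pplus_le_of hpr (hr.trans hH)

lemma lt_of_mem_ooMM_inter_Ioo {p q r : ℝ} (hr : r ∈ ooMM H q ∩ Ioo (pminus H p) p)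
    (h : H p < H q) : p < q := by
  by_contra! hqp
  have hrp := apply_lt_of_mem_Ioo_pminus hr.2.1 hr.2.2
  rcases lt_trichotomy r q with hrq | rfl | hqr
  · rcases hqp.lt_or_eq with hqp | rfl
    · linarith [apply_lt_of_mem_Ioo_pminus (hr.2.1.trans hrq) hqp]
    · exact h.false
  · linarith
  · linarith [apply_lt_of_lt_pplus hqr hr.1.2]

lemma lt_of_mem_ooMM_inter_ooUp {p q r : ℝ} (hr : r ∈ ooMM H q ∩ ooUp H p)
    (h : H q < H p) : q < p := by
  by_contra! hpq
  have hpr := apply_lt_of_lt_pplus hr.2.1 hr.2.2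
  rcases lt_trichotomy r q with hrq | rfl | hqr
  · linarith [apply_lt_of_mem_Ioo_pminus hr.1.1 hrq]
  · linarith
  · rcases hpq.lt_or_eq with hpq | rfl
    · have hq : (q : EReal) < pplus H p := (EReal.coe_lt_coe_iff.2 hqr).trans hr.2.2
      linarith [apply_lt_of_lt_pplus hpq hq]
    · exact h.false

end Bounds

section Conditions

variable {H F : ℝ → ℝ}

lemma condS_of {p : ℝ} (hne : pminus H p ≠ p) (hHF : H p ≤ F p)
    (hright : ∀ q, p < q → H q ≤ F q → H q ≤ H p) : CondS H F p :=
  ⟨hne, hHF, fun q hq ⟨_, hr⟩ =>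
    le_of_not_gt fun h => (hright q (lt_of_mem_ooMM_inter_Ioo hr h) hq).not_gt h⟩

lemma condT_of {p : ℝ} (hne : (p : EReal) ≠ pplus H p) (hFH : F p ≤ H p)
    (hleft : ∀ q, q < p → F q ≤ H q → H p ≤ H q) : CondT H F p :=
  ⟨hne, hFH, fun q hq ⟨_, hr⟩ =>
    le_of_not_gt fun h => (hleft q (lt_of_mem_ooMM_inter_ooUp hr h) hq).not_gt h⟩

lemma apply_lt_of_greatest_minimizer (hH : Continuous H) (hF : Continuous F) (hFanti : Antitone F)
    {q b : ℝ} (hq : F q ≤ H q) (hb : F b ≤ H b)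
    (hmin : ∀ u ∈ Icc q b, F u ≤ H u → H u ≤ H q → u ≤ q) : ∀ r ∈ Ioc q b, H q < H r := by
  intro r hr
  by_contra! hle
  rcases le_or_gt (F r) (H r) with hFr | hHr
  · exact hr.1.not_ge (hmin r (Ioc_subset_Icc_self hr) hFr hle)
  · obtain ⟨u, hu, hHFu⟩ := isPreconnected_Icc.intermediate_value₂ (left_mem_Icc.2 hr.2)
      (right_mem_Icc.2 hr.2) hH.continuousOn hF.continuousOn hHr.le hb
    have hqu : q ≤ u := hr.1.le.trans hu.1
    have huq := hmin u ⟨hqu, hu.2⟩ (by linarith) (by linarith [hFanti hqu])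
    linarith [hr.1, hu.1]

lemma apply_lt_of_least_maximizer (hH : Continuous H) (hF : Continuous F) (hFanti : Antitone F)
    {a q : ℝ} (ha : H a ≤ F a) (hq : H q ≤ F q)
    (hmax : ∀ u ∈ Icc a q, H u ≤ F u → H q ≤ H u → q ≤ u) : ∀ r ∈ Ico a q, H r < H q := by
  intro r hr
  by_contra! hle
  rcases le_or_gt (H r) (F r) with hHr | hFr
  · exact hr.2.not_ge (hmax r (Ico_subset_Icc_self hr) hHr hle)
  · obtain ⟨u, hu, hHFu⟩ := isPreconnected_Icc.intermediate_value₂ (left_mem_Icc.2 hr.1)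
      (right_mem_Icc.2 hr.1) hH.continuousOn hF.continuousOn ha hFr.le
    have huq : u ≤ q := hu.2.trans hr.2.le
    have hqu := hmax u ⟨hu.1, huq⟩ (by linarith) (by linarith [hFanti huq])
    linarith [hr.2, hu.2]

lemma exists_greatest_minimizer_Iic (hH : Continuous H) (hF : Continuous F)
    (hco : Tendsto H atBot atTop) (hFanti : Antitone F) {p : ℝ} (hp : F p ≤ H p) :
    ∃ a ≤ p, F a ≤ H a ∧ (∀ x ≤ p, F x ≤ H x → H a ≤ H x) ∧ ∀ r ∈ Ioc a p, H a < H r := by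
  obtain ⟨c, hc⟩ := (hco.eventually_gt_atTop (H p)).exists_forall_of_atBot
  set K := Iic p ∩ {x | F x ≤ H x} ∩ {x | H x ≤ H p}
  have hK : IsCompact K := isCompact_Icc.of_isClosed_subset
    ((isClosed_Iic.inter (isClosed_le hF hH)).inter (isClosed_le hH continuous_const))
    fun x hx => ⟨le_of_not_gt fun h => (hc x h.le).not_ge hx.2, hx.1.1⟩
  obtain ⟨a, haK, hamin, hgreatest⟩ := exists_greatest_minimizer hH hK ⟨p, ⟨self_mem_Iic, hp⟩, le_refl (H p)⟩
  refine ⟨a, haK.1.1, haK.1.2, fun x hxp hx => ?_, apply_lt_of_greatest_minimizer hH hF hFanti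
    haK.1.2 hp fun u hu hFu hle => hgreatest u ⟨⟨hu.2, hFu⟩, hle.trans haK.2⟩ hle⟩
  rcases le_or_gt (H x) (H p) with hxp' | hpx
  · exact hamin x ⟨⟨hxp, hx⟩, hxp'⟩
  · exact haK.2.trans hpx.le

lemma exists_least_maximizer_Ici (hH : Continuous H) (hF : Continuous F)
    (hco : Tendsto H atTop atTop) (hFanti : Antitone F) {p : ℝ} (hp : H p ≤ F p) :
    ∃ a ≥ p, H a ≤ F a ∧ (∀ x ≥ p, H x ≤ F x → H x ≤ H a) ∧ ∀ r ∈ Ico p a, H r < H a := by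
  obtain ⟨c, hc⟩ := (hco.eventually_gt_atTop (F p)).exists_forall_of_atTop
  set K := Ici p ∩ {x | H x ≤ F x}
  have hK : IsCompact K := isCompact_Icc.of_isClosed_subset
    (isClosed_Ici.inter (isClosed_le hH hF))
    fun x hx => ⟨hx.1, le_of_not_gt fun h => (hc x h.le).not_ge (hx.2.trans (hFanti hx.1))⟩
  obtain ⟨a, haK, hamax, hleast⟩ := exists_least_maximizer hH hK ⟨p, self_mem_Ici, hp⟩
  exact ⟨a, haK.1, haK.2, fun x hx hHx => hamax x ⟨hx, hHx⟩, apply_lt_of_least_maximizer hH hF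
    hFanti hp haK.2 fun u hu hHu hle => hleast u ⟨hu.1, hHu⟩ hle⟩

lemma CondT.le_apply (hH : Continuous H) (hF : Continuous F) (hco : Tendsto H atBot atTop)
    (hFanti : Antitone F) {b x : ℝ} (hb : CondT H F b) (hxb : x ≤ b) (hx : F x ≤ H x) :
    H b ≤ H x := by
  obtain ⟨a, hab, hFa, hmin, hlt⟩ := exists_greatest_minimizer_Iic hH hF hco hFanti hb.2.1
  refine le_trans (le_of_not_gt fun hab' => ?_) (hmin x hxb hx)
  have hplus := pplus_le_pplus (hmin b le_rfl hb.2.1) hlt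
  obtain ⟨r, hbr, hrb⟩ := EReal.lt_iff_exists_real_btwn.1 ((coe_le_pplus b).lt_of_ne hb.1)
  have hbr : b < r := EReal.coe_lt_coe_iff.1 hbr
  exact hab'.not_ge <| hb.2.2 a hFa
    ⟨r, ⟨(pminus_le hco a).trans_lt (hab.trans_lt hbr), hrb.trans_le hplus⟩, hbr, hrb⟩

lemma CondS.apply_le (hH : Continuous H) (hF : Continuous F) (hcoer : Coercive H)
    (hFanti : Antitone F) {a x : ℝ} (ha : CondS H F a) (hax : a ≤ x) (hx : H x ≤ F x) :
    H x ≤ H a := by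
  obtain ⟨b, hab, hHb, hmax, hlt⟩ := exists_least_maximizer_Ici hH hF hcoer.1 hFanti ha.2.1
  refine (hmax x hax hx).trans (le_of_not_gt fun hab' => ?_)
  have hminus := pminus_le_pminus hcoer.2 (hmax a le_rfl ha.2.1) hlt
  obtain ⟨r, har, hra⟩ := exists_between ((pminus_le hcoer.2 a).lt_of_ne ha.1)
  have hrb : (r : EReal) < pplus H b :=
    (EReal.coe_lt_coe_iff.2 (hra.trans_le hab)).trans_le (coe_le_pplus b)
  exact hab'.not_ge <| ha.2.2 b hHb ⟨r, ⟨hminus.trans_lt har, hrb⟩, har, hra⟩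

lemma CondT.apply_le_of_pminus_lt (hH : Continuous H) (hF : Continuous F)
    (hco : Tendsto H atBot atTop) (hFanti : Antitone F) {p : ℝ} (hp : CondT H F p)
    (hmin : pminus H p < p) : H p ≤ F p := by
  by_contra! hFp
  obtain ⟨x, hx, hFx⟩ := exists_mem_Ioo_lt_of_lt_left hF hH hmin hFp
  exact (apply_lt_of_mem_Ioo_pminus hx.1 hx.2).not_ge (hp.le_apply hH hF hco hFanti hx.2.le hFx.le)

lemma CondS.le_apply_of_lt_pplus (hH : Continuous H) (hF : Continuous F) (hcoer : Coercive H)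
    (hFanti : Antitone F) {p : ℝ} (hp : CondS H F p) (hplus : (p : EReal) < pplus H p) :
    F p ≤ H p := by
  by_contra! hHp
  obtain ⟨b, hpb, hb⟩ := EReal.lt_iff_exists_real_btwn.1 hplus
  obtain ⟨x, hx, hHx⟩ := exists_mem_Ioo_lt_of_lt_right hH hF (EReal.coe_lt_coe_iff.1 hpb) hHp
  have hxp : (x : EReal) < pplus H p := (EReal.coe_lt_coe_iff.2 hx.2).trans hb
  exact (apply_lt_of_lt_pplus hx.1 hxp).not_ge (hp.apply_le hH hF hcoer hFanti hx.1.le hHx.le)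

lemma CondT.condS (hH : Continuous H) (hF : Continuous F) (hco : Tendsto H atBot atTop)
    (hFanti : Antitone F) {p : ℝ} (hp : CondT H F p) (hne : pminus H p ≠ p) : CondS H F p :=
  condS_of hne (hp.apply_le_of_pminus_lt hH hF hco hFanti ((pminus_le hco p).lt_of_ne hne))
    fun _ hpq hq => hq.trans ((hFanti hpq.le).trans hp.2.1)

lemma CondS.condT (hH : Continuous H) (hF : Continuous F) (hcoer : Coercive H)
    (hFanti : Antitone F) {p : ℝ} (hp : CondS H F p) (hne : (p : EReal) ≠ pplus H p) :
    CondT H F p :=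
  condT_of hne (hp.le_apply_of_lt_pplus hH hF hcoer hFanti ((coe_le_pplus p).lt_of_ne hne))
    fun _ hqp hq => hp.2.1.trans ((hFanti hqp.le).trans hq)

end Conditions

section Limiter

variable {H F : ℝ → ℝ}

lemma pminus_ne_pplus_of_mem_limiterOf (hco : Tendsto H atBot atTop) {a : ℝ}
    (ha : a ∈ limiterOf H F) : (pminus H a : EReal) ≠ pplus H a := by
  rcases ha with ha | ha
  · exact ((EReal.coe_lt_coe_iff.2 ((pminus_le hco a).lt_of_ne ha.1)).trans_le
      (coe_le_pplus a)).ne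
  · exact ((EReal.coe_le_coe_iff.2 (pminus_le hco a)).trans_lt
      ((coe_le_pplus a).lt_of_ne ha.1)).ne

lemma apply_le_apply_of_mem_limiterOf (hH : Continuous H) (hF : Continuous F)
    (hcoer : Coercive H) (hFanti : Antitone F) {a b : ℝ} (ha : a ∈ limiterOf H F)
    (hb : b ∈ limiterOf H F) (hab : a < b) : H b ≤ H a := by
  rcases ha with haS | haT <;> rcases hb with hbS | hbT
  · exact haS.apply_le hH hF hcoer hFanti hab.le hbS.2.1
  · obtain ⟨y, hy, hHFy⟩ := isPreconnected_Icc.intermediate_value₂ (left_mem_Icc.2 hab.le)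
      (right_mem_Icc.2 hab.le) hH.continuousOn hF.continuousOn haS.2.1 hbT.2.1
    exact (hbT.le_apply hH hF hcoer.2 hFanti hy.2 hHFy.ge).trans
      (haS.apply_le hH hF hcoer hFanti hy.1 hHFy.le)
  · linarith [hFanti hab.le, haT.2.1, hbS.2.1]
  · exact hbT.le_apply hH hF hcoer.2 hFanti hab.le haT.2.1

lemma exists_mem_limiterOf_ooUp (hH : Continuous H) (hF : Continuous F) (hcoer : Coercive H)
    (hFanti : Antitone F) {p : ℝ} (hplus : (p : EReal) < pplus H p) :
    ∃ a ∈ limiterOf H F, (ooUp H p ∩ ooMM H a).Nonempty := by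
  obtain ⟨b, hpb, hb⟩ := EReal.lt_iff_exists_real_btwn.1 hplus
  have hpb : p < b := EReal.coe_lt_coe_iff.1 hpb
  rcases le_or_gt (F p) (H p) with hFp | hHp
  · obtain ⟨a, hap, hFa, hmin, hlt⟩ := exists_greatest_minimizer_Iic hH hF hcoer.2 hFanti hFp
    have hplus' := pplus_le_pplus (hmin p le_rfl hFp) hlt
    have haplus : (a : EReal) < pplus H a :=
      (EReal.coe_lt_coe_iff.2 (hap.trans_lt hpb)).trans (hb.trans_le hplus')
    exact ⟨a, Or.inr (condT_of haplus.ne hFa fun q hqa hq => hmin q (hqa.le.trans hap) hq),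
      b, ⟨hpb, hb⟩, (pminus_le hcoer.2 a).trans_lt (hap.trans_lt hpb), hb.trans_le hplus'⟩
  · obtain ⟨x, hx, hHx⟩ := exists_mem_Ioo_lt_of_lt_right hH hF hpb hHp
    obtain ⟨a, hpa, hHa, hmax, hlt⟩ := exists_least_maximizer_Ici hH hF hcoer.1 hFanti hHp.le
    have hxb : (x : EReal) < pplus H p := (EReal.coe_lt_coe_iff.2 hx.2).trans hb
    have hpa' : H p < H a := (apply_lt_of_lt_pplus hx.1 hxb).trans_le (hmax x hx.1.le hHx.le)
    have hpa : p < a := hpa.lt_of_ne (by rintro rfl; exact hpa'.false)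
    have hminus := (pminus_le_pminus hcoer.2 hpa'.le hlt).trans (pminus_le hcoer.2 p)
    obtain ⟨r, hpr, hr⟩ := exists_between (lt_min hx.1 hpa)
    refine ⟨a, Or.inl (condS_of (hminus.trans_lt hpa).ne hHa fun q haq hq =>
      hmax q (hpa.le.trans haq.le) hq), r, ⟨hpr, ?_⟩, hminus.trans_lt hpr, ?_⟩
    · exact (EReal.coe_lt_coe_iff.2 (hr.trans_le (min_le_left _ _))).trans hxb
    · exact (EReal.coe_lt_coe_iff.2 (hr.trans_le (min_le_right _ _))).trans_le (coe_le_pplus a)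

lemma exists_mem_limiterOf_Ioo_pminus (hH : Continuous H) (hF : Continuous F)
    (hcoer : Coercive H) (hFanti : Antitone F) {p : ℝ} (hmin : pminus H p < p) :
    ∃ a ∈ limiterOf H F, (Ioo (pminus H p) p ∩ ooMM H a).Nonempty := by
  rcases le_or_gt (H p) (F p) with hHp | hFp
  · obtain ⟨a, hpa, hHa, hmax, hlt⟩ := exists_least_maximizer_Ici hH hF hcoer.1 hFanti hHp
    have hminus := pminus_le_pminus hcoer.2 (hmax p le_rfl hHp) hlt
    obtain ⟨r, hr⟩ := exists_between hmin
    refine ⟨a, Or.inl (condS_of (hminus.trans_lt (hmin.trans_le hpa)).ne hHa fun q haq hq =>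
      hmax q (hpa.trans haq.le) hq), r, hr, hminus.trans_lt hr.1, ?_⟩
    exact (EReal.coe_lt_coe_iff.2 (hr.2.trans_le hpa)).trans_le (coe_le_pplus a)
  · obtain ⟨x, hx, hFx⟩ := exists_mem_Ioo_lt_of_lt_left hF hH hmin hFp
    obtain ⟨a, hap, hFa, hminA, hlt⟩ := exists_greatest_minimizer_Iic hH hF hcoer.2 hFanti hFp.le
    have hap' : H a < H p := (hminA x hx.2.le hFx.le).trans_lt (apply_lt_of_mem_Ioo_pminus hx.1 hx.2)
    have hap : a < p := hap.lt_of_ne (by rintro rfl; exact hap'.false)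
    have hplus : (p : EReal) ≤ pplus H a := (coe_le_pplus p).trans (pplus_le_pplus hap'.le hlt)
    obtain ⟨r, hr, hrp⟩ := exists_between (max_lt hx.2 hap)
    refine ⟨a, Or.inr (condT_of ((EReal.coe_lt_coe_iff.2 hap).trans_le hplus).ne hFa
      fun q hqa hq => hminA q (hqa.le.trans hap.le) hq), r,
      ⟨hx.1.trans ((le_max_left _ _).trans_lt hr), hrp⟩, ?_, ?_⟩
    · exact (pminus_le hcoer.2 a).trans_lt ((le_max_right _ _).trans_lt hr)
    · exact (EReal.coe_lt_coe_iff.2 hrp).trans_le hplus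

end Limiter

theorem stmt5_general (H F : ℝ → ℝ) (hH : Continuous H) (hcoer : Coercive H)
    (hF : Continuous F) (hFanti : Antitone F) :
    IsSetLimiter H (limiterOf H F) ∧
    (∀ p ∈ limiterOf H F, pminus H p ≠ p → CondS H F p) ∧
    (∀ p ∈ limiterOf H F, (p : EReal) ≠ pplus H p → CondT H F p) ∧
    (∀ p ∈ limiterOf H F, pminus H p < p → (p : EReal) < pplus H p → F p = H p) := by
  have hS : ∀ p ∈ limiterOf H F, pminus H p ≠ p → CondS H F p := fun p hp hne =>
    hp.elim id fun hT => hT.condS hH hF hcoer.2 hFanti hne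
  have hT : ∀ p ∈ limiterOf H F, (p : EReal) ≠ pplus H p → CondT H F p := fun p hp hne =>
    hp.elim (fun hS => hS.condT hH hF hcoer hFanti hne) id
  refine ⟨⟨fun a ha => pminus_ne_pplus_of_mem_limiterOf hcoer.2 ha,
      fun a ha b hb hab => apply_le_apply_of_mem_limiterOf hH hF hcoer hFanti ha hb hab,
      fun p hp => exists_mem_limiterOf_Ioo_pminus hH hF hcoer hFanti hp,
      fun p hp => exists_mem_limiterOf_ooUp hH hF hcoer hFanti hp⟩, hS, hT, ?_⟩
  intro p hp hmin hplus
  exact le_antisymm (hT p hp hplus.ne).2.1 (hS p hp hmin.ne).2.1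

theorem stmt5 (H F : ℝ → ℝ) (hH : Continuous H) (hcoer : Coercive H)
    (hF : Continuous F) (hFanti : Antitone F) (hFsc : SemiCoercive F) :
    IsSetLimiter H (limiterOf H F) ∧
    (∀ p ∈ limiterOf H F, pminus H p ≠ p → CondS H F p) ∧
    (∀ p ∈ limiterOf H F, (p : EReal) ≠ pplus H p → CondT H F p) ∧
    (∀ p ∈ limiterOf H F, pminus H p < p → (p : EReal) < pplus H p → F p = H p) :=
  stmt5_general H F hH hcoer hF hFanti
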